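/- Let k: ℤ → [0,∞) be a nontrivial kernel with k(0)=0, k(−j)=k(j) for all j ∈ ℤ, and |k|₁ := ∑_{j∈ℤ} k(j) < ∞, and suppose the support S = {j : k(j) > 0} is finite. Set c₀ = min_{j∈S} k(j) > 0. Then the operator L generated by k satisfies CD_Υ(0,F) with the CD-function F(r) = c₀·|k|₁·H(r/|k|₁); that is, for every bounded u: ℤ → ℝ and every x ∈ ℤ with −Lu(x) ≥ 0 one has Ψ_{2,Υ}(u)(x) ≥ c₀·|k|₁·H(−Lu(x)/|k|₁). -/

import Mathlib

open scoped BigOperators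
open Filter Set

noncomputable section

/-- `Υ(r) = e^r − 1 − r`. -/
def Ups (r : ℝ) : ℝ := Real.exp r - 1 - r

/-- `H(x) = (1/2) e^{−x} Υ(2x)`. -/
def Hfun (x : ℝ) : ℝ := (1 / 2) * Real.exp (-x) * Ups (2 * x)

/-- The long-range jump operator `L u (x) = ∑_{j∈ℤ} k(j)(u(x+j) − u(x))`. -/
def Lop (k : ℤ → ℝ) (u : ℤ → ℝ) (x : ℤ) : ℝ := ∑' j : ℤ, k j * (u (x + j) - u x)

/-- `Ψ_Υ(u)(x) = ∑_{j∈ℤ} k(j) Υ(u(x+j) − u(x))`. -/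
def PsiUps (k : ℤ → ℝ) (u : ℤ → ℝ) (x : ℤ) : ℝ := ∑' j : ℤ, k j * Ups (u (x + j) - u x)

/-- `Ψ_{2,Υ}(u)(x)`. -/
def Psi2 (k : ℤ → ℝ) (u : ℤ → ℝ) (x : ℤ) : ℝ :=
  (1 / 2) * ∑' p : ℤ × ℤ, k p.1 * k p.2 * Real.exp (u (x + p.2) - u x) *
    Ups (u (x + p.1 + p.2) - u (x + p.1) - u (x + p.2) + u x)

/-- A bounded function on `ℤ`. -/
def BddFun (u : ℤ → ℝ) : Prop := ∃ M : ℝ, ∀ x : ℤ, |u x| ≤ M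

/-- A nontrivial symmetric integrable kernel on `ℤ` vanishing at `0`. -/
structure IsKernel (k : ℤ → ℝ) : Prop where
  nonneg : ∀ j, 0 ≤ k j
  zero_at_zero : k 0 = 0
  symm : ∀ j, k (-j) = k j
  summable : Summable k
  nontrivial : ∃ j, k j ≠ 0

/-- A CD-function: continuous on `[0,∞)`, nonnegative, `F(0)=0`, `r ↦ F(r)/r` strictly
increasing on `(0,∞)` and `1/F` integrable at `∞`. -/
def IsCDFunction (F : ℝ → ℝ) : Prop :=
  ContinuousOn F (Ici 0) ∧ (∀ r, 0 ≤ r → 0 ≤ F r) ∧ F 0 = 0 ∧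
    StrictMonoOn (fun r => F r / r) (Ioi 0) ∧
    ∃ a, 0 < a ∧ MeasureTheory.IntegrableOn (fun r => 1 / F r) (Ici a)

/-- The curvature-dimension condition `CD_Υ(0,F)` for the operator generated by `k`. -/
def CDUps (k : ℤ → ℝ) (F : ℝ → ℝ) : Prop :=
  ∀ u : ℤ → ℝ, BddFun u → ∀ x : ℤ, 0 ≤ -Lop k u x → F (-Lop k u x) ≤ Psi2 k u x

/-! Write `δ_j = u(x) − (u(x+j) + u(x−j))/2`; by symmetry of `k`, `−Lu(x) = ∑_j k(j) δ_j`.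
Keeping only the diagonal terms `l = −j` of `Ψ_{2,Υ}(u)(x)`, averaging over `j ↔ −j` and using
`e^a + e^b ≥ 2 e^{(a+b)/2}` gives `Ψ_{2,Υ}(u)(x) ≥ ∑_j k(j)² H(δ_j) ≥ c₀ ∑_j k(j) H(δ_j)`.
Since `H` is convex, Jensen's inequality with weights `k(j)/|k|₁` bounds the last sum below by
`|k|₁ H(−Lu(x)/|k|₁)`. -/

open Finset

lemma Ups_nonneg (r : ℝ) : 0 ≤ Ups r := by
  simp only [Ups]
  linarith [Real.add_one_le_exp r]

lemma Hfun_nonneg (x : ℝ) : 0 ≤ Hfun x :=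
  mul_nonneg (by positivity) (Ups_nonneg _)

lemma convexOn_Hfun : ConvexOn ℝ univ Hfun := by
  have hexp_neg (x : ℝ) : HasDerivAt (fun y => Real.exp (-y)) (-Real.exp (-x)) x := by
    simpa using (hasDerivAt_neg x).exp
  have hH (x : ℝ) : HasDerivAt Hfun
      ((Real.exp x + Real.exp (-x)) / 2 - Real.exp (-x) + x * Real.exp (-x)) x := by
    have hform : Hfun = fun y => (Real.exp y - Real.exp (-y)) / 2 - y * Real.exp (-y) := by
      funext y
      have : Real.exp (-y) * Real.exp (2 * y) = Real.exp y := by rw [← Real.exp_add]; ring_nf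
      simp only [Hfun, Ups]
      linear_combination (1 / 2 : ℝ) * this
    rw [hform]
    exact ((((Real.hasDerivAt_exp x).sub (hexp_neg x)).div_const 2).sub
      ((hasDerivAt_id' x).mul (hexp_neg x))).congr_deriv (by ring)
  have hH' (x : ℝ) : HasDerivAt
      (fun y => (Real.exp y + Real.exp (-y)) / 2 - Real.exp (-y) + y * Real.exp (-y))
      (Real.exp x / 2 + (3 / 2 - x) * Real.exp (-x)) x :=
    (((((Real.hasDerivAt_exp x).add (hexp_neg x)).div_const 2).sub (hexp_neg x)).add
      ((hasDerivAt_id' x).mul (hexp_neg x))).congr_deriv (by ring)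
  refine convexOn_of_hasDerivWithinAt2_nonneg convex_univ
    (fun x _ => (hH x).continuousAt.continuousWithinAt)
    (fun x _ => (hH x).hasDerivWithinAt) (fun x _ => (hH' x).hasDerivWithinAt) ?_
  intro x _
  -- `e^{2x} ≥ 1 + 2x` gives `H''(x) ≥ 2 e^{-x}`.
  have h : (2 * x + 1) * Real.exp (-x) ≤ Real.exp x := by
    calc (2 * x + 1) * Real.exp (-x) ≤ Real.exp (2 * x) * Real.exp (-x) := by
          gcongr; exact Real.add_one_le_exp _
      _ = Real.exp x := by rw [← Real.exp_add]; ring_nf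
  nlinarith [Real.exp_pos (-x)]

lemma two_mul_exp_neg_le_exp_add_exp {a b d : ℝ} (h : a + b = -(2 * d)) :
    2 * Real.exp (-d) ≤ Real.exp a + Real.exp b := by
  have hd : Real.exp (-d) = Real.exp (a / 2) * Real.exp (b / 2) := by
    rw [← Real.exp_add]; congr 1; linarith
  have hsq (t : ℝ) : Real.exp t = Real.exp (t / 2) ^ 2 := by
    rw [← Real.exp_nat_mul]; ring_nf
  rw [hd, hsq a, hsq b]
  nlinarith [sq_nonneg (Real.exp (a / 2) - Real.exp (b / 2))]

lemma four_mul_Hfun_le {a b d : ℝ} (h : a + b = -(2 * d)) :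
    4 * Hfun d ≤ (Real.exp a + Real.exp b) * Ups (2 * d) := by
  calc 4 * Hfun d = 2 * Real.exp (-d) * Ups (2 * d) := by unfold Hfun; ring
    _ ≤ _ := mul_le_mul_of_nonneg_right (two_mul_exp_neg_le_exp_add_exp h) (Ups_nonneg _)

theorem ConvexOn.sum_mul_map_div_le {φ : ℝ → ℝ} (hφ : ConvexOn ℝ univ φ) {ι : Type*}
    {s : Finset ι} {w p : ι → ℝ} (hw : ∀ i ∈ s, 0 ≤ w i) (hpos : 0 < ∑ i ∈ s, w i) :
    (∑ i ∈ s, w i) * φ ((∑ i ∈ s, w i * p i) / ∑ i ∈ s, w i) ≤ ∑ i ∈ s, w i * φ (p i) := by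
  have h := hφ.map_centerMass_le (p := p) hw hpos fun _ _ => mem_univ _
  simp only [centerMass, smul_eq_mul, Function.comp_def, ← div_eq_inv_mul] at h
  rwa [le_div_iff₀ hpos, mul_comm] at h

def symmDrop (u : ℤ → ℝ) (x j : ℤ) : ℝ := u x - (u (x + j) + u (x + -j)) / 2

lemma symmDrop_neg (u : ℤ → ℝ) (x j : ℤ) : symmDrop u x (-j) = symmDrop u x j := by
  simp only [symmDrop, neg_neg]; ring

section Kernel

variable {k : ℤ → ℝ}

lemma tsum_mul_eq_sum (hfin : (Function.support k).Finite) (g : ℤ → ℝ) :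
    ∑' j, k j * g j = ∑ j ∈ hfin.toFinset, k j * g j :=
  tsum_eq_sum' <| (Function.support_mul_subset_left k g).trans hfin.coe_toFinset.ge

lemma IsKernel.sum_toFinset_pos (hk : IsKernel k) (hfin : (Function.support k).Finite) :
    0 < ∑ j ∈ hfin.toFinset, k j := by
  obtain ⟨j, hj⟩ := hk.nontrivial
  calc 0 < k j := (hk.nonneg j).lt_of_ne' hj
    _ ≤ _ := single_le_sum (fun i _ => hk.nonneg i) (by simpa using hj)

lemma IsKernel.sum_mul_comp_neg (hk : IsKernel k) (hfin : (Function.support k).Finite)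
    (f : ℤ → ℝ) : ∑ j ∈ hfin.toFinset, k j * f (-j) = ∑ j ∈ hfin.toFinset, k j * f j :=
  sum_nbij' (- ·) (- ·) (fun j hj => by simpa [hk.symm] using hj)
    (fun j hj => by simpa [hk.symm] using hj) (fun j _ => neg_neg j) (fun j _ => neg_neg j)
    (fun j _ => by simp [hk.symm])

lemma IsKernel.neg_Lop_eq_sum (hk : IsKernel k) (hfin : (Function.support k).Finite)
    (u : ℤ → ℝ) (x : ℤ) : -Lop k u x = ∑ j ∈ hfin.toFinset, k j * symmDrop u x j := by
  have hsymm := hk.sum_mul_comp_neg hfin fun j => u (x + j) - u x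
  have hsplit : ∀ j, k j * symmDrop u x j =
      -(k j * (u (x + j) - u x) + k j * (u (x + -j) - u x)) / 2 := fun j => by
    unfold symmDrop; ring
  rw [Lop, tsum_mul_eq_sum hfin, sum_congr rfl fun j _ => hsplit j, ← sum_div, sum_neg_distrib,
    sum_add_distrib, hsymm]
  ring

lemma IsKernel.half_sum_diag_le_Psi2 (hk : IsKernel k) (hfin : (Function.support k).Finite)
    (u : ℤ → ℝ) (x : ℤ) :
    (1 / 2) * ∑ j ∈ hfin.toFinset, k j ^ 2 * Real.exp (u (x + -j) - u x) *
      Ups (2 * symmDrop u x j) ≤ Psi2 k u x := by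
  set S := hfin.toFinset
  set F : ℤ × ℤ → ℝ := fun p => k p.1 * k p.2 * Real.exp (u (x + p.2) - u x) *
    Ups (u (x + p.1 + p.2) - u (x + p.1) - u (x + p.2) + u x)
  have hF_nonneg (p : ℤ × ℤ) : 0 ≤ F p :=
    mul_nonneg (by have := hk.nonneg p.1; have := hk.nonneg p.2; positivity) (Ups_nonneg _)
  have hF_supp : Function.support F ⊆ ↑(S ×ˢ S) := by
    intro p hp
    simp only [S, coe_product, Set.Finite.coe_toFinset, Set.mem_prod, Function.mem_support]
    constructor <;> intro h <;> simp [F, h] at hp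
  have hF_diag (j : ℤ) : F (j, -j) =
      k j ^ 2 * Real.exp (u (x + -j) - u x) * Ups (2 * symmDrop u x j) := by
    simp only [F, symmDrop, hk.symm, add_neg_cancel_right]
    ring_nf
  rw [Psi2, tsum_eq_sum' hF_supp, sum_product]
  gcongr with j hj
  rw [← hF_diag]
  exact single_le_sum (fun l _ => hF_nonneg (j, l)) (by simpa [S, hk.symm] using hj)

lemma IsKernel.sum_sq_mul_Hfun_le_Psi2 (hk : IsKernel k) (hfin : (Function.support k).Finite)
    (u : ℤ → ℝ) (x : ℤ) :
    ∑ j ∈ hfin.toFinset, k j ^ 2 * Hfun (symmDrop u x j) ≤ Psi2 k u x := by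
  set S := hfin.toFinset
  set E : ℤ → ℝ := fun j => u (x + j) - u x
  have hswap := hk.sum_mul_comp_neg hfin fun j =>
    k j * Real.exp (E (-j)) * Ups (2 * symmDrop u x j)
  simp only [neg_neg, hk.symm, symmDrop_neg] at hswap
  calc ∑ j ∈ S, k j ^ 2 * Hfun (symmDrop u x j)
      ≤ ∑ j ∈ S, k j ^ 2 * ((Real.exp (E j) + Real.exp (E (-j))) * Ups (2 * symmDrop u x j)) / 4 :=
        sum_le_sum fun j _ => by
          have := four_mul_Hfun_le (a := E j) (b := E (-j)) (d := symmDrop u x j)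
            (by simp only [E, symmDrop]; ring)
          nlinarith [sq_nonneg (k j)]
    _ = (∑ j ∈ S, k j * (k j * Real.exp (E j) * Ups (2 * symmDrop u x j)) +
          ∑ j ∈ S, k j * (k j * Real.exp (E (-j)) * Ups (2 * symmDrop u x j))) / 4 := by
        rw [← sum_add_distrib, sum_div]
        exact sum_congr rfl fun j _ => by ring
    _ = (1 / 2) * ∑ j ∈ S, k j ^ 2 * Real.exp (E (-j)) * Ups (2 * symmDrop u x j) := by
        rw [hswap, ← sum_add_distrib, sum_div, mul_sum]
        exact sum_congr rfl fun j _ => by ring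
    _ ≤ Psi2 k u x := hk.half_sum_diag_le_Psi2 hfin u x

end Kernel

/-- Corollary (finite support): if the support of `k` is finite, then the generated operator
satisfies `CD_Υ(0,F)` with `F(r) = c₀ |k|₁ H(r/|k|₁)`, where `c₀ = min_{j ∈ supp k} k(j)`;
that is, for every bounded `u` and every `x` with `−Lu(x) ≥ 0`,
`Ψ_{2,Υ}(u)(x) ≥ c₀ |k|₁ H(−Lu(x)/|k|₁)`. -/
theorem finite_support_CD (k : ℤ → ℝ) (hk : IsKernel k)
    (hfin : (Function.support k).Finite) :
    ∀ u : ℤ → ℝ, BddFun u → ∀ x : ℤ, 0 ≤ -Lop k u x →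
      sInf (k '' Function.support k) * (∑' j : ℤ, k j) *
        Hfun (-Lop k u x / (∑' j : ℤ, k j)) ≤ Psi2 k u x := by
  intro u _ x _
  set S := hfin.toFinset
  set c₀ := sInf (k '' Function.support k)
  have hk_img : ∀ y ∈ k '' Function.support k, 0 ≤ y := by
    rintro _ ⟨j, -, rfl⟩; exact hk.nonneg j
  have hc₀ : 0 ≤ c₀ := Real.sInf_nonneg hk_img
  have hc₀_le : ∀ j ∈ S, c₀ ≤ k j := fun j hj =>
    csInf_le ⟨0, hk_img⟩ ⟨j, by simpa [S] using hj, rfl⟩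
  have hK : ∑' j, k j = ∑ j ∈ S, k j := tsum_eq_sum' hfin.coe_toFinset.ge
  rw [hK, hk.neg_Lop_eq_sum hfin, mul_assoc]
  calc c₀ * ((∑ j ∈ S, k j) * Hfun ((∑ j ∈ S, k j * symmDrop u x j) / ∑ j ∈ S, k j))
      ≤ c₀ * ∑ j ∈ S, k j * Hfun (symmDrop u x j) := by
        gcongr
        exact convexOn_Hfun.sum_mul_map_div_le (fun j _ => hk.nonneg j) (hk.sum_toFinset_pos hfin)
    _ ≤ ∑ j ∈ S, k j ^ 2 * Hfun (symmDrop u x j) := by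
        rw [mul_sum]
        refine sum_le_sum fun j hj => ?_
        have := mul_le_mul_of_nonneg_right (hc₀_le j hj)
          (mul_nonneg (hk.nonneg j) (Hfun_nonneg (symmDrop u x j)))
        linarith
    _ ≤ Psi2 k u x := hk.sum_sq_mul_Hfun_le_Psi2 hfin u x
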